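/- Let d be a positive squarefree integer, K = Q(√d) a real quadratic field of discriminant D, and κ(d) its caliber number. If a rational prime p splits in K, then κ(d) > 2·⌊log(√D/2)/log p⌋. -/

import Mathlib

noncomputable section

/-- The binary quadratic form `[A,B,C]` is reduced of discriminant `D`. -/
def IsReducedForm (D A B C : ℤ) : Prop :=
  D = B ^ 2 - 4 * A * C ∧ 0 < A ∧ B < 0 ∧ C < 0 ∧
    ((|B| : ℤ) : ℝ) < Real.sqrt D ∧
    Real.sqrt D - ((|B| : ℤ) : ℝ) < 2 * (A : ℝ) ∧
    2 * (A : ℝ) < Real.sqrt D + ((|B| : ℤ) : ℝ)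

/-- The form `[A,B,C]` is primitive. -/
def IsPrimitiveForm (A B C : ℤ) : Prop := Int.gcd A (Int.gcd B C) = 1

/-- The caliber number: the number of reduced primitive forms of discriminant `D`. -/
def caliber (D : ℤ) : ℕ :=
  Nat.card {f : ℤ × ℤ × ℤ //
    IsReducedForm D f.1 f.2.1 f.2.2 ∧ IsPrimitiveForm f.1 f.2.1 f.2.2}

/-- `rho D A` is the number of classes `[B] ∈ ℤ/2Aℤ` with `B ^ 2 ≡ D (mod 4A)`. -/
def rho (D : ℤ) (A : ℕ) : ℕ :=
  Nat.card {B : ZMod (2 * A) //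
    ∃ b : ℤ, (b : ZMod (2 * A)) = B ∧ (4 * (A : ℤ)) ∣ b ^ 2 - D}

/-- The discriminant of the real quadratic field `ℚ(√d)` for `d` squarefree. -/
def disc (d : ℕ) : ℤ := if d % 4 = 1 then (d : ℤ) else 4 * d

/-- The Kronecker symbol `(D / p)` for a prime `p` (via the Jacobi symbol for odd `p`). -/
def kronecker (D : ℤ) (p : ℕ) : ℤ :=
  if p = 2 then (if D % 8 = 1 then 1 else if D % 8 = 5 then -1 else 0)
  else jacobiSym D p

end

/-! For `0 < A` with `2A ≤ √D`, every square root `r` of `D` modulo `4A` yields a reduced form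
`[A, -b, (b² - D) / 4A]`: take `b ≡ r (mod 2A)` in the window `(√D - 2A, √D)` of length `2A`.
As `p` splits, `D` has a square root modulo `4p` prime to `p`, and Hensel lifting gives square
roots `±r` modulo `4pᵏ` that stay distinct modulo `2pᵏ`. So each `A = pᵏ` with
`1 ≤ k ≤ ⌊log (√D / 2) / log p⌋` carries two primitive reduced forms, and `A = 1` carries one. -/

open Finset

theorem two_mul_add_one_le_ncard_of_fibers {α β : Type*} {S : Set α} (hS : S.Finite)
    (lead : α → β) {a : ℕ → β} (ha : Function.Injective a) {n : ℕ} (h0 : ∃ x ∈ S, lead x = a 0)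
    (h : ∀ k < n, ∃ x ∈ S, ∃ y ∈ S, x ≠ y ∧ lead x = a (k + 1) ∧ lead y = a (k + 1)) :
    2 * n + 1 ≤ S.ncard := by
  classical
  set s := hS.toFinset
  have hfib0 : 1 ≤ #{x ∈ s | lead x = a 0} := by
    obtain ⟨x, hx, hxa⟩ := h0
    exact card_pos.mpr ⟨x, by simpa [s, hx] using hxa⟩
  have hfib : ∀ k ∈ range n, 2 ≤ #{x ∈ s | lead x = a (k + 1)} := by
    intro k hk
    obtain ⟨x, hx, y, hy, hxy, hxa, hya⟩ := h k (mem_range.mp hk)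
    exact one_lt_card.mpr ⟨x, by simpa [s, hx] using hxa, y, by simpa [s, hy] using hya, hxy⟩
  calc 2 * n + 1
      ≤ ∑ k ∈ range n, #{x ∈ s | lead x = a (k + 1)} + #{x ∈ s | lead x = a 0} := by
        have := card_nsmul_le_sum _ _ _ hfib
        rw [card_range, smul_eq_mul] at this
        omega
    _ = ∑ k ∈ range (n + 1), #{x ∈ s | lead x = a k} :=
        (sum_range_succ' (fun k => #{x ∈ s | lead x = a k}) n).symm
    _ = ∑ j ∈ (range (n + 1)).image a, #{x ∈ s | lead x = j} :=
        (sum_image (f := fun j => #{x ∈ s | lead x = j}) ha.injOn).symm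
    _ = #{x ∈ s | lead x ∈ (range (n + 1)).image a} := sum_card_fiberwise_eq_card_filter _ _ _
    _ ≤ #s := card_filter_le _ _
    _ = S.ncard := (Set.ncard_eq_toFinset_card S hS).symm

theorem Int.exists_modEq_mem_Ioo {x : ℝ} (hx : ∀ n : ℤ, x ≠ n) {m : ℤ} (hm : 0 < m) (r : ℤ) :
    ∃ b : ℤ, b ≡ r [ZMOD m] ∧ x - m < b ∧ (b : ℝ) < x := by
  have hlt := Int.emod_lt_of_pos (⌊x⌋ - r) hm
  have hnonneg := Int.emod_nonneg (⌊x⌋ - r) hm.ne'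
  refine ⟨⌊x⌋ - (⌊x⌋ - r) % m,
    by simpa using (Int.ModEq.refl ⌊x⌋).sub (Int.mod_modEq (⌊x⌋ - r) m), ?_, ?_⟩
  · have : ((⌊x⌋ - m + 1 : ℤ) : ℝ) ≤ ((⌊x⌋ - (⌊x⌋ - r) % m : ℤ) : ℝ) := by
      exact_mod_cast by omega
    push_cast at this ⊢
    linarith [Int.lt_floor_add_one x]
  · have : ((⌊x⌋ - (⌊x⌋ - r) % m : ℤ) : ℝ) ≤ ⌊x⌋ := by exact_mod_cast by omega
    exact lt_of_le_of_ne (this.trans (Int.floor_le x)) (hx _).symm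

theorem two_mul_pow_le_of_le_floor_log {x : ℝ} (hx : 0 < x) {p : ℕ} (hp : 1 < p) {k : ℕ}
    (hk : (k : ℤ) ≤ ⌊Real.log (x / 2) / Real.log p⌋) : 2 * (p : ℝ) ^ k ≤ x := by
  have hlogp : 0 < Real.log p := Real.log_pos (by exact_mod_cast hp)
  have hk' : k * Real.log p ≤ Real.log (x / 2) :=
    (le_div_iff₀ hlogp).mp (by exact_mod_cast Int.le_floor.mp hk)
  rw [← Real.log_pow, Real.log_le_log_iff (by positivity) (by positivity)] at hk'
  linarith

theorem sq_modEq_four_of_modEq_two {D b : ℤ} (hD : D % 4 = 0 ∨ D % 4 = 1)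
    (hb : b ≡ D [ZMOD 2]) : b ^ 2 ≡ D [ZMOD 4] := by
  obtain ⟨t, rfl⟩ : ∃ t, b = D + 2 * t := ⟨(b - D) / 2, by have := hb.symm.dvd; omega⟩
  obtain ⟨e, rfl | rfl⟩ : ∃ e, D = 4 * e ∨ D = 4 * e + 1 := ⟨D / 4, by omega⟩
  · exact Int.modEq_of_dvd ⟨e - 4 * e ^ 2 - 4 * e * t - t ^ 2, by ring⟩
  · exact Int.modEq_of_dvd ⟨-e - 4 * e ^ 2 - 4 * e * t - t - t ^ 2, by ring⟩

theorem exists_sq_modEq_four_mul_prime {D : ℤ} (hD : D % 4 = 0 ∨ D % 4 = 1) {p : ℕ}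
    (hp : p.Prime) (hsplit : kronecker D p = 1) :
    ∃ b : ℤ, b ^ 2 ≡ D [ZMOD 4 * p] ∧ IsCoprime (p : ℤ) b := by
  unfold kronecker at hsplit
  by_cases hp2 : p = 2
  · subst hp2
    refine ⟨1, Int.modEq_of_dvd ?_, isCoprime_one_right⟩
    simp only [if_true] at hsplit
    split_ifs at hsplit <;> omega
  have : Fact p.Prime := ⟨hp⟩
  rw [if_neg hp2, ← jacobiSym.legendreSym.to_jacobiSym] at hsplit
  have hDp : (D : ZMod p) ≠ 0 := by
    intro h
    rw [(legendreSym.eq_zero_iff p D).mpr h] at hsplit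
    exact zero_ne_one hsplit
  obtain ⟨c, hc⟩ := (legendreSym.eq_one_iff p hDp).mp hsplit
  obtain ⟨c, rfl⟩ := ZMod.intCast_surjective c
  have hcD : c ^ 2 ≡ D [ZMOD p] :=
    (ZMod.intCast_eq_intCast_iff _ _ p).mp (by push_cast; rw [hc, sq])
  obtain ⟨q, hq⟩ := hp.odd_of_ne_two hp2
  set b := c + p * (c + D)
  have hbc : b ≡ c [ZMOD p] := Int.modEq_of_dvd ⟨-(c + D), by ring⟩
  have hbD : b ≡ D [ZMOD 2] :=
    Int.modEq_of_dvd ⟨-(c + q * (c + D)), by simp only [b, hq]; push_cast; ring⟩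
  have hcop : (4 : ℤ).natAbs.Coprime (p : ℤ).natAbs := by
    simpa using Nat.Coprime.pow_left 2 (Nat.coprime_two_left.mpr ⟨q, hq⟩)
  refine ⟨b, (Int.modEq_and_modEq_iff_modEq_mul hcop).mp
    ⟨sq_modEq_four_of_modEq_two hD hbD, (hbc.pow 2).trans hcD⟩, ?_⟩
  rw [Irreducible.coprime_iff_not_dvd (Nat.prime_iff_prime_int.mp hp).irreducible]
  intro hpb
  have hpc : (p : ℤ) ∣ c := (Int.ModEq.dvd_iff hbc).mp hpb
  exact hDp ((ZMod.intCast_zmod_eq_zero_iff_dvd D p).mpr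
    ((Int.ModEq.dvd_iff hcD).mp (dvd_pow hpc two_ne_zero)))

theorem exists_sq_modEq_four_mul_pow_succ_succ {p b D : ℤ} {k : ℕ}
    (hb : b ^ 2 ≡ D [ZMOD 4 * p ^ (k + 1)]) (hpb : IsCoprime p b) :
    ∃ b', b' ^ 2 ≡ D [ZMOD 4 * p ^ (k + 2)] ∧ IsCoprime p b' := by
  obtain ⟨m, hm⟩ := hb.symm.dvd
  obtain ⟨u, v, huv⟩ := hpb
  -- `b' = b - 2 p^(k+1) m v` kills the next digit of `(b² - D) / 4p^(k+1)` as `v b ≡ 1 (mod p)`.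
  refine ⟨b - 2 * p ^ (k + 1) * m * v, Int.modEq_of_dvd ⟨-(m * u) - p ^ k * m ^ 2 * v ^ 2, ?_⟩, ?_⟩
  · linear_combination (-1 : ℤ) * hm + 4 * p ^ (k + 1) * m * huv
  · exact ⟨u + 2 * p ^ k * m * v * v, v, by linear_combination huv⟩

theorem exists_sq_modEq_four_mul_pow_succ {p D : ℤ}
    (h : ∃ b, b ^ 2 ≡ D [ZMOD 4 * p] ∧ IsCoprime p b) (k : ℕ) :
    ∃ b, b ^ 2 ≡ D [ZMOD 4 * p ^ (k + 1)] ∧ IsCoprime p b := by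
  induction k with
  | zero => simpa using h
  | succ k ih =>
    obtain ⟨b, hb, hpb⟩ := ih
    exact exists_sq_modEq_four_mul_pow_succ_succ hb hpb

def reducedPrimitiveForms (D : ℤ) : Set (ℤ × ℤ × ℤ) :=
  {f | IsReducedForm D f.1 f.2.1 f.2.2 ∧ IsPrimitiveForm f.1 f.2.1 f.2.2}

theorem caliber_eq_ncard (D : ℤ) : caliber D = (reducedPrimitiveForms D).ncard :=
  Nat.card_coe_set_eq _

theorem reducedPrimitiveForms_finite (D : ℤ) : (reducedPrimitiveForms D).Finite := by
  refine (Set.finite_Icc ((1 : ℤ), -D, -D) (D, -1, -1)).subset ?_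
  rintro ⟨A, B, C⟩ ⟨⟨hD, hA, hB, hC, hBD, -, hhi⟩, -⟩
  dsimp only at *
  rw [abs_of_neg hB] at hBD hhi
  push_cast at hBD hhi
  have hA2 : A ^ 2 < D := by
    exact_mod_cast (Real.lt_sqrt (by positivity)).mp (by linarith : (A : ℝ) < √D)
  have hB2 : B ^ 2 < D := by
    have hB' : (B : ℝ) < 0 := by exact_mod_cast hB
    have := (Real.lt_sqrt (by linarith)).mp hBD
    rw [neg_sq] at this
    exact_mod_cast this
  simp only [Set.mem_Icc, Prod.mk_le_mk]
  refine ⟨⟨by omega, by nlinarith, by nlinarith⟩, by nlinarith, by omega, by omega⟩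

theorem isPrimitiveForm_of_isCoprime {A B : ℤ} (h : IsCoprime A B) (C : ℤ) :
    IsPrimitiveForm A B C :=
  Int.isCoprime_iff_gcd_eq_one.mp (h.of_isCoprime_of_dvd_right (Int.gcd_dvd_left B C))

theorem isReducedForm_of_mem_Ioo {D A b : ℤ} (hAD : 2 * (A : ℝ) ≤ √D) (hA : 0 < A)
    (hb : b ^ 2 ≡ D [ZMOD 4 * A]) (hlo : √D - 2 * A < b) (hhi : (b : ℝ) < √D) :
    IsReducedForm D A (-b) ((b ^ 2 - D) / (4 * A)) := by
  have hb0 : 0 < b := by exact_mod_cast (by linarith : (0 : ℝ) < b)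
  have hbD : b ^ 2 < D := by exact_mod_cast (Real.lt_sqrt (by positivity)).mp hhi
  have hC : 4 * A * ((b ^ 2 - D) / (4 * A)) = b ^ 2 - D := Int.mul_ediv_cancel' hb.symm.dvd
  have habs : ((|-b| : ℤ) : ℝ) = b := by rw [abs_neg, abs_of_pos hb0]
  refine ⟨by linarith, hA, by omega, by nlinarith, ?_, ?_, ?_⟩ <;> rw [habs] <;> linarith

theorem exists_mem_reducedPrimitiveForms {D A r : ℤ} (hD : ∀ n : ℤ, √(D : ℝ) ≠ n) (hA : 0 < A)
    (hAD : 2 * (A : ℝ) ≤ √D) (hr : r ^ 2 ≡ D [ZMOD 4 * A]) (hAr : IsCoprime A r) :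
    ∃ b, b ≡ r [ZMOD 2 * A] ∧ (A, -b, (b ^ 2 - D) / (4 * A)) ∈ reducedPrimitiveForms D := by
  obtain ⟨b, hbr, hlo, hhi⟩ := Int.exists_modEq_mem_Ioo hD (by positivity : 0 < 2 * A) r
  obtain ⟨s, hs⟩ := hbr.dvd
  have hb : b ^ 2 ≡ D [ZMOD 4 * A] :=
    (Int.modEq_of_dvd ⟨s * (b + A * s), by linear_combination (r + b + 2 * A * s) * hs⟩).trans hr
  have hAb : IsCoprime A b := by
    rw [show b = r + A * (-(2 * s)) by linarith]
    exact hAr.add_mul_left_right _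
  exact ⟨b, hbr, isReducedForm_of_mem_Ioo hAD hA hb (by push_cast at hlo; linarith) hhi,
    isPrimitiveForm_of_isCoprime hAb.neg_right _⟩

theorem exists_two_mem_reducedPrimitiveForms {D A r : ℤ} (hD : ∀ n : ℤ, √(D : ℝ) ≠ n)
    (hA : 1 < A) (hAD : 2 * (A : ℝ) ≤ √D) (hr : r ^ 2 ≡ D [ZMOD 4 * A]) (hAr : IsCoprime A r) :
    ∃ f ∈ reducedPrimitiveForms D, ∃ g ∈ reducedPrimitiveForms D, f ≠ g ∧ f.1 = A ∧ g.1 = A := by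
  obtain ⟨b, hbr, hb⟩ := exists_mem_reducedPrimitiveForms hD (by omega) hAD hr hAr
  obtain ⟨b', hbr', hb'⟩ :=
    exists_mem_reducedPrimitiveForms hD (by omega) hAD (by rwa [neg_sq]) hAr.neg_right
  refine ⟨_, hb, _, hb', fun h => ?_, rfl, rfl⟩
  obtain rfl : b = b' := by simpa using congrArg (fun f => f.2.1) h
  obtain ⟨s, hs⟩ := (hbr.symm.trans hbr').dvd
  have hAdvd : A ∣ r := ⟨-s, by linarith⟩
  obtain h | h := Int.isUnit_iff.mp (hAr.isUnit_of_dvd' dvd_rfl hAdvd) <;> omega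

theorem exists_principal_mem_reducedPrimitiveForms {D : ℤ} (hD : ∀ n : ℤ, √(D : ℝ) ≠ n)
    (hD4 : D % 4 = 0 ∨ D % 4 = 1) (h2D : 2 ≤ √(D : ℝ)) :
    ∃ f ∈ reducedPrimitiveForms D, f.1 = 1 := by
  obtain ⟨b, -, hb⟩ := exists_mem_reducedPrimitiveForms hD one_pos (by simpa using h2D)
    (by simpa using sq_modEq_four_of_modEq_two hD4 rfl) isCoprime_one_left
  exact ⟨_, hb, rfl⟩

theorem disc_emod_four (d : ℕ) : disc d % 4 = 0 ∨ disc d % 4 = 1 := by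
  unfold disc
  split <;> omega

theorem not_isSquare_disc {d : ℕ} (hd : Squarefree d) (h1 : 1 < d) : ¬IsSquare (disc d) := by
  have hne : ∀ m : ℤ, (d : ℤ) ≠ m * m := fun m hm => by
    obtain rfl | rfl :=
      Int.isUnit_iff.mp (Int.squarefree_natCast.mpr hd m ⟨1, by rw [hm, mul_one]⟩) <;> omega
  rintro ⟨m, hm⟩
  unfold disc at hm
  split_ifs at hm
  · exact hne m hm
  · obtain ⟨t, rfl⟩ : (2 : ℤ) ∣ m :=
      Int.prime_two.dvd_of_dvd_pow (n := 2) ⟨2 * d, by rw [sq, ← hm]; ring⟩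
    exact hne t (by linarith)

theorem irrational_sqrt_disc {d : ℕ} (hd : Squarefree d) (h1 : 1 < d) :
    Irrational √(disc d : ℝ) :=
  irrational_sqrt_intCast_iff.mpr ⟨not_isSquare_disc hd h1, by unfold disc; split <;> positivity⟩

theorem stmt6 (d : ℕ) (hd : Squarefree d) (h1 : 1 < d)
    (p : ℕ) (hp : p.Prime) (hsplit : kronecker (disc d) p = 1) :
    2 * ⌊Real.log (Real.sqrt (disc d) / 2) / Real.log p⌋ < (caliber (disc d) : ℤ) := by
  set D := disc d
  have hirr : Irrational √(D : ℝ) := irrational_sqrt_disc hd h1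
  obtain hneg | hnonneg := lt_or_ge ⌊Real.log (√D / 2) / Real.log p⌋ 0
  · omega
  obtain ⟨n, hn⟩ := Int.eq_ofNat_of_zero_le hnonneg
  have hbound : ∀ k ≤ n, 2 * ((p ^ k : ℤ) : ℝ) ≤ √D := fun k hk => by
    push_cast
    exact two_mul_pow_le_of_le_floor_log (hirr.ne_zero.symm.lt_of_le (Real.sqrt_nonneg _))
      hp.one_lt (by omega)
  have hprincipal : ∃ f ∈ reducedPrimitiveForms D, f.1 = (p : ℤ) ^ 0 := by
    simpa using exists_principal_mem_reducedPrimitiveForms hirr.ne_int (disc_emod_four d)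
      (by simpa using hbound 0 n.zero_le)
  have hroots := exists_sq_modEq_four_mul_pow_succ
    (exists_sq_modEq_four_mul_prime (disc_emod_four d) hp hsplit)
  have hpairs : ∀ k < n, ∃ f ∈ reducedPrimitiveForms D, ∃ g ∈ reducedPrimitiveForms D,
      f ≠ g ∧ f.1 = (p : ℤ) ^ (k + 1) ∧ g.1 = (p : ℤ) ^ (k + 1) := fun k hk => by
    obtain ⟨r, hr, hpr⟩ := hroots k
    exact exists_two_mem_reducedPrimitiveForms hirr.ne_int
      (one_lt_pow₀ (by exact_mod_cast hp.one_lt) k.succ_ne_zero) (hbound (k + 1) hk) hr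
      hpr.pow_left
  have hcount := two_mul_add_one_le_ncard_of_fibers (reducedPrimitiveForms_finite D) Prod.fst
    (pow_right_injective₀ (by exact_mod_cast hp.pos) (by exact_mod_cast hp.ne_one))
    hprincipal hpairs
  rw [caliber_eq_ncard]
  omega
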